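/- arXiv:0911.0172 — 2 statements merged into one kernel-verified Lean document; each statement's English description precedes it below -/
import Mathlib

section
/- Let (𝒰, 𝒱) be a stable t-structure in a triangulated category D, C a thick subcategory, and Q : D → D/C the quotient functor. If (Q(𝒰), Q(𝒱)) is a stable t-structure in D/C, then (𝒰 ∩ C, 𝒱 ∩ C) is a stable t-structure in C. -/
open CategoryTheory Pretriangulated Limits

universe v₁ v₂ u₁ u₂

variable {D : Type u₁} [Category.{v₁} D] [HasZeroObject D] [Preadditive D]
  [HasShift D ℤ] [∀ n : ℤ, (shiftFunctor D n).Additive] [Pretriangulated D]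
  {E : Type u₂} [Category.{v₂} E] [HasZeroObject E] [Preadditive E]
  [HasShift E ℤ] [∀ n : ℤ, (shiftFunctor E n).Additive] [Pretriangulated E]

/-- A stable t-structure on a (pre)triangulated category. -/
def IsStableTStructure {D : Type u₁} [Category.{v₁} D] [HasZeroObject D]
    [Preadditive D] [HasShift D ℤ] [∀ n : ℤ, (shiftFunctor D n).Additive]
    [Pretriangulated D] (U V : Set D) : Prop :=
  (∀ (n : ℤ) (X : D), X ∈ U → X⟦n⟧ ∈ U) ∧
  (∀ (n : ℤ) (X : D), X ∈ V → X⟦n⟧ ∈ V) ∧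
  (∀ (X Y : D) (f : X ⟶ Y), X ∈ U → Y ∈ V → f = 0) ∧
  (∀ X : D, ∃ (A B : D) (f : A ⟶ X) (g : X ⟶ B) (h : B ⟶ A⟦(1 : ℤ)⟧),
    A ∈ U ∧ B ∈ V ∧ Triangle.mk f g h ∈ distTriang D)

/-- A stable t-structure `(U, V)` on a full subcategory `C` of a (pre)triangulated
category `D`, expressed in the ambient category: the defining triangles lie in `D` and
have their vertices in the prescribed subsets. -/
def IsStableTStructureOn {D : Type u₁} [Category.{v₁} D] [HasZeroObject D]
    [Preadditive D] [HasShift D ℤ] [∀ n : ℤ, (shiftFunctor D n).Additive]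
    [Pretriangulated D] (C U V : Set D) : Prop :=
  U ⊆ C ∧ V ⊆ C ∧
  (∀ (n : ℤ) (X : D), X ∈ U → X⟦n⟧ ∈ U) ∧
  (∀ (n : ℤ) (X : D), X ∈ V → X⟦n⟧ ∈ V) ∧
  (∀ (X Y : D) (f : X ⟶ Y), X ∈ U → Y ∈ V → f = 0) ∧
  (∀ X ∈ C, ∃ (A B : D) (f : A ⟶ X) (g : X ⟶ B) (h : B ⟶ A⟦(1 : ℤ)⟧),
    A ∈ U ∧ B ∈ V ∧ Triangle.mk f g h ∈ distTriang D)

/-- The class of morphisms of `D` whose cone belongs to `C`; inverting them produces the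
Verdier quotient `D/C`. -/
def coneIn (C : Set D) : MorphismProperty D :=
  fun X Y f => ∃ (Z : D) (g : Y ⟶ Z) (h : Z ⟶ X⟦(1 : ℤ)⟧),
    Z ∈ C ∧ Triangle.mk f g h ∈ distTriang D

/-! ### Auxiliary material: a multiplicative closure of `coneIn C`

Since `coneIn C` need not be known to be multiplicative in a merely pretriangulated
category, we work with its multiplicative closure `mclosAux`, for which we can establish a
left calculus of fractions by purely pretriangulated arguments. -/

/-- The multiplicative closure of `coneIn C` (chains of morphisms with cone in `C`). -/
inductive MClosAux (C : Set D) : ∀ {X Y : D}, (X ⟶ Y) → Prop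
  | of {X Y : D} (f : X ⟶ Y) (hf : coneIn C f) : MClosAux C f
  | id (X : D) : MClosAux C (𝟙 X)
  | comp {X Y Z : D} (f : X ⟶ Y) (g : Y ⟶ Z) (hf : coneIn C f) (hg : MClosAux C g) :
      MClosAux C (f ≫ g)

/-- The multiplicative closure of `coneIn C` as a `MorphismProperty`. -/
def mclosAux (C : Set D) : MorphismProperty D := fun _ _ f => MClosAux C f

lemma mclosAux_comp (C : Set D) :
    ∀ {X Y : D} (f : X ⟶ Y), MClosAux C f →
      ∀ {Z : D} (g : Y ⟶ Z), MClosAux C g → MClosAux C (f ≫ g) := by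
  intro X Y f hf
  induction hf with
  | of f hf => exact fun g hg => MClosAux.comp f g hf hg
  | id X => intro Z g hg; rw [Category.id_comp]; exact hg
  | comp a b ha hb ih =>
      intro Z g hg
      rw [Category.assoc]
      exact MClosAux.comp _ _ ha (ih _ hg)

lemma mclosAux_isInvertedBy (C : Set D) {E₀ : Type*} [Category E₀] (F : D ⥤ E₀)
    (hF : (coneIn C).IsInvertedBy F) : (mclosAux C).IsInvertedBy F := by
  intro X Y f hf
  induction hf with
  | of f hf => exact hF f hf
  | id X => rw [F.map_id]; infer_instance
  | comp a b ha hb ih =>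
      rw [F.map_comp]
      haveI := hF a ha
      haveI := ih
      infer_instance

/-- The strict universal property transfers from `coneIn C` to its multiplicative
closure, for the constructed localization functor `(coneIn C).Q`. -/
noncomputable def mclosAuxSUP (C : Set D) (E₀ : Type*) [Category E₀] :
    Localization.StrictUniversalPropertyFixedTarget (coneIn C).Q (mclosAux C) E₀ where
  inverts := mclosAux_isInvertedBy C _ ((coneIn C).Q_inverts)
  lift F hF := Localization.Construction.lift F (fun _ _ f hf => hF f (MClosAux.of f hf))
  fac F hF := Localization.Construction.fac F _
  uniq F₁ F₂ h := Localization.Construction.uniq F₁ F₂ h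

/-! ### Pretriangulated lemmas about `coneIn C` -/

section ConeLemmas

variable (C : Set D)

lemma coneIn_tgt_mem (hCshift : ∀ (n : ℤ) (X : D), X ∈ C → X⟦n⟧ ∈ C)
    (hCext : ∀ (T : Triangle D), (T ∈ distTriang D) →
      T.obj₁ ∈ C → T.obj₃ ∈ C → T.obj₂ ∈ C)
    {X Y : D} (f : X ⟶ Y) (hf : coneIn C f) (hY : Y ∈ C) : X ∈ C := by
  obtain ⟨Z, g, h, hZ, hT⟩ := hf
  exact hCext _ (inv_rot_of_distTriang _ hT) (hCshift (-1) Z hZ) hY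

lemma coneIn_src_mem
    (hCext : ∀ (T : Triangle D), (T ∈ distTriang D) →
      T.obj₁ ∈ C → T.obj₃ ∈ C → T.obj₂ ∈ C)
    {X Y : D} (f : X ⟶ Y) (hf : coneIn C f) (hX : X ∈ C) : Y ∈ C := by
  obtain ⟨Z, g, h, hZ, hT⟩ := hf
  exact hCext _ hT hX hZ

/-- Left fraction square for a single `coneIn C` morphism. -/
lemma coneIn_square (hCshift : ∀ (n : ℤ) (X : D), X ∈ C → X⟦n⟧ ∈ C)
    {Z X : D} (s : Z ⟶ X) (hs : coneIn C s) {Y : D} (f : Z ⟶ Y) :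
    ∃ (Y' : D) (f' : X ⟶ Y') (s' : Y ⟶ Y'), coneIn C s' ∧ f ≫ s' = s ≫ f' := by
  obtain ⟨K, g, hc, hK, hT⟩ := hs
  have hT' : (Triangle.mk s g hc).invRotate ∈ distTriang D := inv_rot_of_distTriang _ hT
  let j : (K⟦(-1 : ℤ)⟧ : D) ⟶ Z := (Triangle.mk s g hc).invRotate.mor₁
  obtain ⟨Y', s', d, hTc⟩ := distinguished_cocone_triangle (j ≫ f)
  have hzero : j ≫ (f ≫ s') = 0 := by
    rw [← Category.assoc]
    exact comp_distTriang_mor_zero₁₂ _ hTc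
  obtain ⟨f', hf'⟩ := Triangle.yoneda_exact₂ _ hT' (f ≫ s') hzero
  refine ⟨Y', f', s',
    ⟨(K⟦(-1 : ℤ)⟧)⟦(1 : ℤ)⟧, d, _, hCshift 1 _ (hCshift (-1) _ hK),
      rot_of_distTriang _ hTc⟩, hf'⟩

/-- Equalizing property for a single `coneIn C` morphism. -/
lemma coneIn_ext (hCshift : ∀ (n : ℤ) (X : D), X ∈ C → X⟦n⟧ ∈ C)
    {X' X : D} (s : X' ⟶ X) (hs : coneIn C s) {Y : D} (f₁ f₂ : X ⟶ Y)
    (hf : s ≫ f₁ = s ≫ f₂) :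
    ∃ (Y' : D) (t : Y ⟶ Y'), coneIn C t ∧ f₁ ≫ t = f₂ ≫ t := by
  obtain ⟨K, g, hc, hK, hT⟩ := hs
  have hker : s ≫ (f₁ - f₂) = 0 := by rw [Preadditive.comp_sub, hf, sub_self]
  obtain ⟨q, hq⟩ := Triangle.yoneda_exact₂ _ hT (f₁ - f₂) hker
  let q' : K ⟶ Y := q
  have hq' : f₁ - f₂ = g ≫ q' := hq
  obtain ⟨Y', t, d, hTc⟩ := distinguished_cocone_triangle q'
  refine ⟨Y', t, ⟨K⟦(1 : ℤ)⟧, d, _, hCshift 1 _ hK, rot_of_distTriang _ hTc⟩, ?_⟩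
  have hqt : q' ≫ t = 0 := comp_distTriang_mor_zero₁₂ _ hTc
  have h0 : (f₁ - f₂) ≫ t = 0 := by
    rw [hq', Category.assoc, hqt, comp_zero]
  rw [← sub_eq_zero, ← Preadditive.sub_comp]
  exact h0

/-- The key step: if `v` has cone in `C` and `v ≫ r` factors through an object of `C`,
then `r` itself factors through an object of `C`. -/
lemma coneIn_step (hCshift : ∀ (n : ℤ) (X : D), X ∈ C → X⟦n⟧ ∈ C)
    (hCext : ∀ (T : Triangle D), (T ∈ distTriang D) →
      T.obj₁ ∈ C → T.obj₃ ∈ C → T.obj₂ ∈ C)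
    {Z₀ Z₁ Y : D} (v : Z₀ ⟶ Z₁) (hv : coneIn C v) (r : Z₁ ⟶ Y)
    {P : D} (hP : P ∈ C) (a : Z₀ ⟶ P) (b : P ⟶ Y) (hab : v ≫ r = a ≫ b) :
    ∃ (P' : D) (_ : P' ∈ C) (a' : Z₁ ⟶ P') (b' : P' ⟶ Y), a' ≫ b' = r := by
  obtain ⟨L, u, w, hL, hT⟩ := hv
  have hT' : (Triangle.mk v u w).invRotate ∈ distTriang D := inv_rot_of_distTriang _ hT
  -- the fiber inclusion `j : L⟦-1⟧ ⟶ Z₀`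
  let j : (L⟦(-1 : ℤ)⟧ : D) ⟶ Z₀ := (Triangle.mk v u w).invRotate.mor₁
  have hjv : j ≫ v = 0 := comp_distTriang_mor_zero₁₂ _ hT'
  obtain ⟨P', sp, dp, hTp⟩ := distinguished_cocone_triangle (j ≫ a)
  have hP' : P' ∈ C :=
    hCext (Triangle.mk (j ≫ a) sp dp).rotate
      (rot_of_distTriang _ hTp) hP (hCshift 1 _ (hCshift (-1) _ hL))
  -- `α' : Z₁ ⟶ P'` with `a ≫ sp = v ≫ α'`
  have hz1 : j ≫ (a ≫ sp) = 0 := by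
    rw [← Category.assoc]
    exact comp_distTriang_mor_zero₁₂ _ hTp
  obtain ⟨α', hα⟩ := Triangle.yoneda_exact₂ _ hT' (a ≫ sp) hz1
  let α₂ : Z₁ ⟶ P' := α'
  have hα₂ : a ≫ sp = v ≫ α₂ := hα
  -- `γ : P' ⟶ Y` with `b = sp ≫ γ`
  have hz2 : (j ≫ a) ≫ b = 0 := by
    rw [Category.assoc, ← hab, ← Category.assoc, hjv, zero_comp]
  obtain ⟨γ, hγ⟩ := Triangle.yoneda_exact₂ _ hTp b hz2
  let γ₂ : P' ⟶ Y := γ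
  have hγ₂ : b = sp ≫ γ₂ := hγ
  -- `r - α' ≫ γ` is killed by `v`, hence factors through `L`
  have hz3 : v ≫ (r - α₂ ≫ γ₂) = 0 := by
    rw [Preadditive.comp_sub, ← Category.assoc, ← hα₂, Category.assoc, ← hγ₂, hab,
      sub_self]
  obtain ⟨lam, hlam⟩ := Triangle.yoneda_exact₂ _ hT (r - α₂ ≫ γ₂) hz3
  let lam₂ : L ⟶ Y := lam
  have hlam₂ : r - α₂ ≫ γ₂ = u ≫ lam₂ := hlam
  refine ⟨P' ⊞ L,
    hCext _ (binaryBiproductTriangle_distinguished P' L) hP' hL,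
    biprod.lift α₂ u, biprod.desc γ₂ lam₂, ?_⟩
  rw [biprod.lift_desc, ← hlam₂]
  abel

/-- `C` is closed under retracts. -/
lemma retract_mem (hCiso : ∀ (X Y : D), (X ≅ Y) → X ∈ C → Y ∈ C)
    (hCsumm : ∀ (X Y : D), (X ⊞ Y) ∈ C → X ∈ C)
    {X P : D} (hP : P ∈ C) (a : X ⟶ P) (b : P ⟶ X) (hab : a ≫ b = 𝟙 X) : X ∈ C := by
  obtain ⟨Ca, c, d, hT⟩ := distinguished_cocone_triangle a
  have hd : d = 0 := by
    have h31 : d ≫ a⟦(1 : ℤ)⟧' = 0 := comp_distTriang_mor_zero₃₁ _ hT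
    calc d = d ≫ 𝟙 (X⟦(1 : ℤ)⟧) := (Category.comp_id _).symm
      _ = d ≫ (a ≫ b)⟦(1 : ℤ)⟧' := by rw [hab]; simp
      _ = (d ≫ a⟦(1 : ℤ)⟧') ≫ b⟦(1 : ℤ)⟧' := by
          rw [Functor.map_comp, Category.assoc]
      _ = 0 := by rw [h31, zero_comp]
  have hT0 : Triangle.mk a c (0 : Ca ⟶ X⟦(1 : ℤ)⟧) ∈ distTriang D := by
    rw [← hd]; exact hT
  obtain ⟨e, -, -⟩ := exists_iso_binaryBiproduct_of_distTriang _ hT0 rfl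
  exact hCsumm X Ca (hCiso P (X ⊞ Ca) e hP)

/-- Sources of zero-composite `mclosAux`-chains that factor through `C` lie in `C`. -/
lemma mclosAux_factor_mem (hCshift : ∀ (n : ℤ) (X : D), X ∈ C → X⟦n⟧ ∈ C)
    (hCiso : ∀ (X Y : D), (X ≅ Y) → X ∈ C → Y ∈ C)
    (hCext : ∀ (T : Triangle D), (T ∈ distTriang D) →
      T.obj₁ ∈ C → T.obj₃ ∈ C → T.obj₂ ∈ C)
    (hCsumm : ∀ (X Y : D), (X ⊞ Y) ∈ C → X ∈ C) :
    ∀ {X Y : D} (s : X ⟶ Y), MClosAux C s →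
      ∀ (P : D) (a : X ⟶ P) (b : P ⟶ Y), P ∈ C → a ≫ b = s → X ∈ C := by
  intro X Y s hs
  induction hs with
  | id Z =>
      intro P a b hP hab
      exact retract_mem C hCiso hCsumm hP a b hab
  | of f hf =>
      intro P a b hP hab
      obtain ⟨P', hP', a', b', hr⟩ := coneIn_step C hCshift hCext f hf (𝟙 _) hP a b
        (by rw [Category.comp_id]; exact hab.symm)
      have hYC : _ ∈ C := retract_mem C hCiso hCsumm hP' a' b' hr
      exact coneIn_tgt_mem C hCshift hCext f hf hYC
  | comp f g hf hg ih =>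
      intro P a b hP hab
      obtain ⟨P', hP', a', b', hr⟩ := coneIn_step C hCshift hCext f hf g hP a b hab.symm
      have hMC : _ ∈ C := ih P' a' b' hP' hr
      exact coneIn_tgt_mem C hCshift hCext f hf hMC

/-- Left fraction square for `mclosAux C`. -/
lemma mclosAux_square (hCshift : ∀ (n : ℤ) (X : D), X ∈ C → X⟦n⟧ ∈ C) :
    ∀ {Z X : D} (s : Z ⟶ X), MClosAux C s → ∀ {Y : D} (f : Z ⟶ Y),
      ∃ (Y' : D) (f' : X ⟶ Y') (s' : Y ⟶ Y'), MClosAux C s' ∧ f ≫ s' = s ≫ f' := by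
  intro Z X s hs
  induction hs with
  | id Z => exact fun f => ⟨_, f, 𝟙 _, MClosAux.id _, by simp⟩
  | of g hg =>
      intro Y f
      obtain ⟨Y', f', s', hs', hsq⟩ := coneIn_square C hCshift g hg f
      exact ⟨Y', f', s', MClosAux.of s' hs', hsq⟩
  | comp g₁ g₂ hg₁ hg₂ ih =>
      intro Y f
      obtain ⟨Y₁, f₁, t₁, ht₁, sq₁⟩ := coneIn_square C hCshift g₁ hg₁ f
      obtain ⟨Y₂, f₂, t₂, ht₂, sq₂⟩ := ih f₁
      refine ⟨Y₂, f₂, t₁ ≫ t₂, MClosAux.comp t₁ t₂ ht₁ ht₂, ?_⟩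
      rw [← Category.assoc, sq₁, Category.assoc, sq₂, ← Category.assoc]

/-- Equalizing property for `mclosAux C`. -/
lemma mclosAux_ext (hCshift : ∀ (n : ℤ) (X : D), X ∈ C → X⟦n⟧ ∈ C) :
    ∀ {X' X : D} (s : X' ⟶ X), MClosAux C s → ∀ {Y : D} (f₁ f₂ : X ⟶ Y),
      s ≫ f₁ = s ≫ f₂ →
      ∃ (Y' : D) (t : Y ⟶ Y'), MClosAux C t ∧ f₁ ≫ t = f₂ ≫ t := by
  intro X' X s hs
  induction hs with
  | id Z =>
      intro Y f₁ f₂ h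
      refine ⟨Y, 𝟙 Y, MClosAux.id Y, ?_⟩
      simpa using h
  | of g hg =>
      intro Y f₁ f₂ h
      obtain ⟨Y', t, ht, hft⟩ := coneIn_ext C hCshift g hg f₁ f₂ h
      exact ⟨Y', t, MClosAux.of t ht, hft⟩
  | comp g₁ g₂ hg₁ hg₂ ih =>
      intro Y f₁ f₂ h
      rw [Category.assoc, Category.assoc] at h
      obtain ⟨Y₁, t₁, ht₁, hft₁⟩ := coneIn_ext C hCshift g₁ hg₁ _ _ h
      rw [Category.assoc, Category.assoc] at hft₁
      obtain ⟨Y₂, t₂, ht₂, hft₂⟩ := ih _ _ hft₁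
      refine ⟨Y₂, t₁ ≫ t₂, MClosAux.comp t₁ t₂ ht₁ ht₂, ?_⟩
      simp only [Category.assoc] at hft₂ ⊢
      exact hft₂

end ConeLemmas

/-- Let `C` be a thick subcategory of `D`, and let `Q : D ⥤ E` be the Verdier quotient
`D → D/C` (a triangle functor which is a localization at the morphisms with cone in `C`).
If `(𝒰, 𝒱)` is a stable t-structure in `D` such that the images `(Q(𝒰), Q(𝒱))` form a
stable t-structure in `D/C`, then `(𝒰 ∩ C, 𝒱 ∩ C)` is a stable t-structure in `C`. -/
theorem stableTStructure_inter_of_quotient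
    (C : Set D)
    (hCshift : ∀ (n : ℤ) (X : D), X ∈ C → X⟦n⟧ ∈ C)
    (hCiso : ∀ (X Y : D), (X ≅ Y) → X ∈ C → Y ∈ C)
    (hCzero : ∀ X : D, IsZero X → X ∈ C)
    (hCext : ∀ (T : Triangle D), (T ∈ distTriang D) →
      T.obj₁ ∈ C → T.obj₃ ∈ C → T.obj₂ ∈ C)
    (hCsumm : ∀ (X Y : D), (X ⊞ Y) ∈ C → X ∈ C)
    (Q : D ⥤ E) [Q.CommShift ℤ] [Q.IsTriangulated] [Q.IsLocalization (coneIn C)]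
    (U V : Set D) (hUV : IsStableTStructure U V)
    (hQ : IsStableTStructure
      {Y : E | ∃ X ∈ U, Nonempty (Q.obj X ≅ Y)}
      {Y : E | ∃ X ∈ V, Nonempty (Q.obj X ≅ Y)}) :
    IsStableTStructureOn C (U ∩ C) (V ∩ C) := by
  -- set up the localization theory for the multiplicative closure of `coneIn C`
  haveI hmul : (mclosAux C).IsMultiplicative :=
    { id_mem := fun X => MClosAux.id X
      comp_mem := fun f g hf hg => mclosAux_comp C f hf g hg }
  haveI hcalc : (mclosAux C).HasLeftCalculusOfFractions :=
    { exists_leftFraction := fun X Y φ => by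
        obtain ⟨Y', f', s', hs', hsq⟩ := mclosAux_square C hCshift φ.s φ.hs φ.f
        exact ⟨MorphismProperty.LeftFraction.mk f' s' hs', hsq⟩
      ext := fun X' X Y f₁ f₂ s hs h => by
        obtain ⟨Y', t, ht, hft⟩ := mclosAux_ext C hCshift s hs f₁ f₂ h
        exact ⟨Y', t, ht, hft⟩ }
  haveI hloc0 : (coneIn C).Q.IsLocalization (mclosAux C) :=
    Functor.IsLocalization.mk' _ _ (mclosAuxSUP C _) (mclosAuxSUP C _)
  haveI hloc : Q.IsLocalization (mclosAux C) :=
    Functor.IsLocalization.of_equivalence_target ((coneIn C).Q) (mclosAux C) Q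
      (Localization.equivalenceFromModel Q (coneIn C))
      (Localization.qCompEquivalenceFromModelFunctorIso Q (coneIn C))
  -- the kernel lemma input: an object whose identity is killed by `Q` lies in `C`
  have kernelMem : ∀ (B : D), Q.map (𝟙 B) = Q.map (0 : B ⟶ B) → B ∈ C := by
    intro B hzero
    obtain ⟨Z₀, s, hs, hcomp⟩ :=
      (MorphismProperty.map_eq_iff_postcomp Q (mclosAux C) (𝟙 B) 0).mp hzero
    have hs0 : s = 0 := by simpa using hcomp
    obtain ⟨O, hO⟩ := (inferInstance : HasZeroObject D).zero
    refine mclosAux_factor_mem C hCshift hCiso hCext hCsumm s hs O (0 : B ⟶ O)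
      (0 : O ⟶ Z₀) (hCzero O hO) ?_
    rw [hs0, zero_comp]
  -- main construction
  refine ⟨Set.inter_subset_right, Set.inter_subset_right,
    fun n X hX => ⟨hUV.1 n X hX.1, hCshift n X hX.2⟩,
    fun n X hX => ⟨hUV.2.1 n X hX.1, hCshift n X hX.2⟩,
    fun X Y f hX hY => hUV.2.2.1 X Y f hX.1 hY.1, ?_⟩
  intro X hX
  obtain ⟨A, B, f, g, h, hA, hB, hT⟩ := hUV.2.2.2 X
  -- `h : B ⟶ A⟦1⟧` has cone `X⟦1⟧ ∈ C`
  have hh : coneIn C h :=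
    ⟨X⟦(1 : ℤ)⟧, _, _, hCshift 1 X hX,
      rot_of_distTriang _ (rot_of_distTriang _ hT)⟩
  haveI : IsIso (Q.map h) := Localization.inverts Q (coneIn C) h hh
  -- `Q.obj B` lies in both classes of the stable t-structure downstairs
  have hmem₁ : Q.obj B ∈ {Y : E | ∃ X ∈ U, Nonempty (Q.obj X ≅ Y)} :=
    ⟨A⟦(1 : ℤ)⟧, hUV.1 1 A hA, ⟨(asIso (Q.map h)).symm⟩⟩
  have hmem₂ : Q.obj B ∈ {Y : E | ∃ X ∈ V, Nonempty (Q.obj X ≅ Y)} :=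
    ⟨B, hB, ⟨Iso.refl _⟩⟩
  have hid : 𝟙 (Q.obj B) = 0 := hQ.2.2.1 _ _ (𝟙 (Q.obj B)) hmem₁ hmem₂
  have hBC : B ∈ C := by
    refine kernelMem B ?_
    rw [Q.map_id, Functor.map_zero, hid]
  have hAC : A ∈ C :=
    hCext (Triangle.mk f g h).invRotate (inv_rot_of_distTriang _ hT)
      (hCshift (-1) B hBC) hX
  exact ⟨A, B, f, g, h, ⟨hA, hAC⟩, ⟨hB, hBC⟩, hT⟩
end

section
/- Let 𝒜 be an abelian category and ℬ an additive full subcategory. Then (K^{+,b}(ℬ)/K^b(ℬ), K^{-,b}(ℬ)/K^b(ℬ)) is a stable t-structure in K^{∞,b}(ℬ)/K^b(ℬ). In particular, for every complex X of objects of ℬ with bounded homology, there is a triangle τ_{≥1}X → X → τ_{≤0}X → Σ(τ_{≥1}X) in the homotopy category, with τ_{≥1}X bounded below and τ_{≤0}X bounded above. -/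
/-!
The brutal truncations `τ_{>n} K ⟶ K ⟶ τ_{≤n} K` form a degreewise split short exact sequence
of complexes, hence a distinguished triangle in the homotopy category. Since `P` contains the zero
objects, the truncations again have components in `P`, and their homology agrees with that of `K`
away from the degrees `n` and `n + 1`; so for `n = 0` the outer vertices lie in `K^{+,b}(P)` and
`K^{-,b}(P)`. A morphism from a complex vanishing below `a` to one vanishing above `b` factors,
already as a chain map, through `τ_{≤b}` of its source, which is bounded.
-/

open CategoryTheory Pretriangulated Limits

universe v u

variable (A : Type u) [Category.{v} A] [Abelian A]

/-- The homotopy category of unbounded cochain complexes over `A`. -/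
abbrev HtpyCat := HomotopyCategory A (ComplexShape.up ℤ)

variable {A}

/-- Complexes all of whose components belong to the class `P` of objects of `A`. -/
def withComponentsIn (P : Set A) : Set (HtpyCat A) :=
  {X | ∀ i : ℤ, X.as.X i ∈ P}

/-- `K^{∞,b}(P)`: complexes with components in `P` and bounded homology. -/
def Kinfb (P : Set A) : Set (HtpyCat A) :=
  {X | X ∈ withComponentsIn P ∧
    ∃ m n : ℤ, ∀ i : ℤ, (i < m ∨ n < i) → X.as.ExactAt i}

/-- `K^{+,b}(P)`: bounded below complexes with components in `P` and bounded homology. -/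
def Kplusb (P : Set A) : Set (HtpyCat A) :=
  {X | X ∈ Kinfb P ∧ ∃ n : ℤ, ∀ i : ℤ, i < n → IsZero (X.as.X i)}

/-- `K^{-,b}(P)`: bounded above complexes with components in `P` and bounded homology. -/
def Kminusb (P : Set A) : Set (HtpyCat A) :=
  {X | X ∈ Kinfb P ∧ ∃ n : ℤ, ∀ i : ℤ, n < i → IsZero (X.as.X i)}

/-- `K^b(P)`: bounded complexes with components in `P`. -/
def Kb (P : Set A) : Set (HtpyCat A) :=
  {X | X ∈ withComponentsIn P ∧ ∃ m n : ℤ, ∀ i : ℤ, (i < m ∨ n < i) → IsZero (X.as.X i)}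

/-- A stable t-structure `(U/C, V/C)` on the Verdier quotient of the full triangulated
subcategory of the homotopy category determined by `D` by the one determined by `C`,
expressed in the ambient homotopy category: `U` and `V` are shift-stable classes inside
`D` containing `C`; every morphism from `U` to `V` vanishes in the quotient, i.e.
factors through an object of `C`; and every object of `D` sits in a distinguished
triangle with outer vertices in `U` and `V`. -/
def IsStableTStructureModOn (D C U V : Set (HtpyCat A)) : Prop :=
  C ⊆ U ∧ C ⊆ V ∧ U ⊆ D ∧ V ⊆ D ∧
  (∀ (n : ℤ) (X : HtpyCat A), X ∈ U → X⟦n⟧ ∈ U) ∧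
  (∀ (n : ℤ) (X : HtpyCat A), X ∈ V → X⟦n⟧ ∈ V) ∧
  (∀ (X Y : HtpyCat A) (f : X ⟶ Y), X ∈ U → Y ∈ V →
    ∃ (Z : HtpyCat A) (a : X ⟶ Z) (b : Z ⟶ Y), Z ∈ C ∧ a ≫ b = f) ∧
  (∀ X ∈ D, ∃ (B C' : HtpyCat A) (f : B ⟶ X) (g : X ⟶ C') (h : C' ⟶ B⟦(1 : ℤ)⟧),
    B ∈ U ∧ C' ∈ V ∧ Triangle.mk f g h ∈ distTriang (HtpyCat A))

namespace HomologicalComplex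

open ZeroObject

variable {ι : Type*} {c : ComplexShape ι}

section

variable {C : Type*} [Category* C] [HasZeroMorphisms C] [HasZeroObject C]
  (K : HomologicalComplex C c) (p : ι → Prop) [DecidablePred p]

-- Mathlib's `stupidTrunc` does not yet come with the inclusion and projection morphisms.
noncomputable def brutalTrunc : HomologicalComplex C c where
  X i := if p i then K.X i else 0
  d i j := if h : p i ∧ p j then
    eqToHom (if_pos h.1) ≫ K.d i j ≫ eqToHom (if_pos h.2).symm else 0
  shape i j hij := by
    by_cases h : p i ∧ p j
    · rw [dif_pos h, K.shape i j hij]; simp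
    · exact dif_neg h
  d_comp_d' i j k _ _ := by
    by_cases hij : p i ∧ p j
    · by_cases hjk : p j ∧ p k
      · simp [hij, hjk]
      · simp [hjk]
    · simp [hij]

noncomputable def brutalTruncXIso {i : ι} (h : p i) : (K.brutalTrunc p).X i ≅ K.X i :=
  eqToIso (if_pos h)

lemma brutalTrunc_d {i j : ι} (hi : p i) (hj : p j) :
    (K.brutalTrunc p).d i j =
      (K.brutalTruncXIso p hi).hom ≫ K.d i j ≫ (K.brutalTruncXIso p hj).inv :=
  dif_pos ⟨hi, hj⟩

lemma brutalTrunc_d_comp_XIso_hom {i j : ι} (hi : p i) (hj : p j) :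
    (K.brutalTrunc p).d i j ≫ (K.brutalTruncXIso p hj).hom =
      (K.brutalTruncXIso p hi).hom ≫ K.d i j := by
  simp [K.brutalTrunc_d p hi hj]

lemma brutalTrunc_d_eq_zero {i j : ι} (h : ¬ (p i ∧ p j)) : (K.brutalTrunc p).d i j = 0 :=
  dif_neg h

lemma isZero_brutalTrunc_X {i : ι} (h : ¬ p i) : IsZero ((K.brutalTrunc p).X i) := by
  simpa [brutalTrunc, if_neg h] using Limits.isZero_zero C

lemma brutalTrunc_X_mem {P : Set C} (hP : ∀ X : C, IsZero X → X ∈ P) (hK : ∀ i, K.X i ∈ P)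
    (i : ι) : (K.brutalTrunc p).X i ∈ P := by
  by_cases h : p i
  · simpa [brutalTrunc, if_pos h] using hK i
  · exact hP _ (K.isZero_brutalTrunc_X p h)

noncomputable def brutalTruncι (hp : ∀ i j, c.Rel i j → p i → p j) : K.brutalTrunc p ⟶ K where
  f i := if h : p i then (K.brutalTruncXIso p h).hom else 0
  comm' i j hij := by
    by_cases hi : p i
    · simp [hi, dif_pos (hp i j hij hi), K.brutalTrunc_d p hi (hp i j hij hi)]
    · simp [hi, K.brutalTrunc_d_eq_zero p (fun h => hi h.1)]

lemma brutalTruncι_f (hp : ∀ i j, c.Rel i j → p i → p j) {i : ι} (h : p i) :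
    (K.brutalTruncι p hp).f i = (K.brutalTruncXIso p h).hom :=
  dif_pos h

lemma isIso_brutalTruncι_f (hp : ∀ i j, c.Rel i j → p i → p j) {i : ι} (h : p i) :
    IsIso ((K.brutalTruncι p hp).f i) := by
  rw [K.brutalTruncι_f p hp h]
  infer_instance

noncomputable def brutalTruncπ (hp : ∀ i j, c.Rel i j → p j → p i) : K ⟶ K.brutalTrunc p where
  f i := if h : p i then (K.brutalTruncXIso p h).inv else 0
  comm' i j hij := by
    by_cases hj : p j
    · simp [hj, dif_pos (hp i j hij hj), K.brutalTrunc_d p (hp i j hij hj) hj]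
    · simp [hj, K.brutalTrunc_d_eq_zero p (fun h => hj h.2)]

lemma brutalTruncπ_f (hp : ∀ i j, c.Rel i j → p j → p i) {i : ι} (h : p i) :
    (K.brutalTruncπ p hp).f i = (K.brutalTruncXIso p h).inv :=
  dif_pos h

lemma isIso_brutalTruncπ_f (hp : ∀ i j, c.Rel i j → p j → p i) {i : ι} (h : p i) :
    IsIso ((K.brutalTruncπ p hp).f i) := by
  rw [K.brutalTruncπ_f p hp h]
  infer_instance

lemma exactAt_brutalTrunc {i : ι} (hK : K.ExactAt i) (hprev : p (c.prev i)) (hi : p i)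
    (hnext : p (c.next i)) : (K.brutalTrunc p).ExactAt i := by
  rw [exactAt_iff' _ (c.prev i) i (c.next i) rfl rfl] at hK ⊢
  refine (ShortComplex.exact_iff_of_iso (ShortComplex.isoMk (K.brutalTruncXIso p hprev)
    (K.brutalTruncXIso p hi) (K.brutalTruncXIso p hnext) ?_ ?_)).2 hK
  · exact (K.brutalTrunc_d_comp_XIso_hom p hprev hi).symm
  · exact (K.brutalTrunc_d_comp_XIso_hom p hi hnext).symm

noncomputable def brutalTruncDesc {L : HomologicalComplex C c} (φ : K ⟶ L)
    (hL : ∀ i, ¬ p i → IsZero (L.X i)) : K.brutalTrunc p ⟶ L where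
  f i := if h : p i then (K.brutalTruncXIso p h).hom ≫ φ.f i else 0
  comm' i j hij := by
    by_cases hi : p i
    · by_cases hj : p j
      · simp [hi, hj, K.brutalTrunc_d p hi hj]
      · exact (hL j hj).eq_of_tgt _ _
    · simp [hi, K.brutalTrunc_d_eq_zero p (fun h => hi h.1)]

lemma brutalTruncπ_desc (hp : ∀ i j, c.Rel i j → p j → p i) {L : HomologicalComplex C c}
    (φ : K ⟶ L) (hL : ∀ i, ¬ p i → IsZero (L.X i)) :
    K.brutalTruncπ p hp ≫ K.brutalTruncDesc p φ hL = φ := by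
  ext i
  by_cases h : p i
  · simp [brutalTruncπ, brutalTruncDesc, h]
  · exact (hL i h).eq_of_tgt _ _

end

section

variable {C : Type*} [Category* C] [Preadditive C] [HasZeroObject C]
  (K : HomologicalComplex C c) (p : ι → Prop) [DecidablePred p] (hp : ∀ i j, c.Rel i j → p i → p j)

noncomputable def brutalTruncShortComplex : ShortComplex (HomologicalComplex C c) :=
  ShortComplex.mk (K.brutalTruncι p hp)
    (K.brutalTruncπ (fun i => ¬ p i) (fun i j hij hj hi => hj (hp i j hij hi))) (by
      ext i
      by_cases h : p i
      · simp [brutalTruncπ, h]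
      · simp [brutalTruncι, h])

noncomputable def brutalTruncShortComplexSplitting (i : ι) :
    ((K.brutalTruncShortComplex p hp).map (eval C c i)).Splitting :=
  if h : p i then
    .ofIsIsoOfIsZero _ (K.isIso_brutalTruncι_f p hp h)
      (K.isZero_brutalTrunc_X (fun i => ¬ p i) (not_not.2 h))
  else
    .ofIsZeroOfIsIso _ (K.isZero_brutalTrunc_X p h) (K.isIso_brutalTruncπ_f (fun i => ¬ p i)
      (fun i j hij hj hi => hj (hp i j hij hi)) h)

end

end HomologicalComplex

namespace CochainComplex

open HomologicalComplex

variable {C : Type*} [Category* C] [Preadditive C] [HasZeroObject C] (K : CochainComplex C ℤ)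

noncomputable abbrev brutalTruncGT (n : ℤ) : CochainComplex C ℤ := K.brutalTrunc (n < ·)

-- Phrased with `¬ n < ·` so that it is the complement truncation of `brutalTruncShortComplex`.
noncomputable abbrev brutalTruncLE (n : ℤ) : CochainComplex C ℤ := K.brutalTrunc (¬ n < ·)

instance (n : ℤ) : (K.brutalTruncGT n).IsStrictlyGE (n + 1) := by
  rw [isStrictlyGE_iff]
  intro i hi
  exact K.isZero_brutalTrunc_X _ (by omega)

instance (n : ℤ) : (K.brutalTruncLE n).IsStrictlyLE n := by
  rw [isStrictlyLE_iff]
  intro i hi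
  exact K.isZero_brutalTrunc_X _ (by omega)

instance (p : ℤ → Prop) [DecidablePred p] (a : ℤ) [K.IsStrictlyGE a] :
    IsStrictlyGE (K.brutalTrunc p) a := by
  rw [isStrictlyGE_iff]
  intro i hi
  by_cases h : p i
  · exact (K.isZero_of_isStrictlyGE a i hi).of_iso (K.brutalTruncXIso p h)
  · exact K.isZero_brutalTrunc_X p h

lemma isLE_brutalTruncGT (n b : ℤ) [K.IsLE b] : (K.brutalTruncGT n).IsLE (max b (n + 1)) := by
  rw [isLE_iff]
  intro i hi
  exact K.exactAt_brutalTrunc _ (K.exactAt_of_isLE b i (by omega))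
    (by rw [CochainComplex.prev]; omega) (by omega) (by rw [CochainComplex.next]; omega)

lemma isGE_brutalTruncLE (a n : ℤ) [K.IsGE a] : (K.brutalTruncLE n).IsGE (min a n) := by
  rw [isGE_iff]
  intro i hi
  exact K.exactAt_brutalTrunc _ (K.exactAt_of_isGE a i (by omega))
    (by rw [CochainComplex.prev]; omega) (by omega) (by rw [CochainComplex.next]; omega)

noncomputable def brutalTruncTriangle (n : ℤ) : Triangle (HomotopyCategory C (ComplexShape.up ℤ)) :=
  trianglehOfDegreewiseSplit _ (K.brutalTruncShortComplexSplitting (n < ·)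
    fun i j (hij : i + 1 = j) hi => by omega)

lemma brutalTruncTriangle_distinguished [HasBinaryBiproducts C] (n : ℤ) :
    K.brutalTruncTriangle n ∈ distTriang _ :=
  (HomotopyCategory.distinguished_iff_iso_trianglehOfDegreewiseSplit _).2
    ⟨_, _, ⟨Iso.refl _⟩⟩

end CochainComplex

section HomotopyCategory

open CochainComplex HomologicalComplex

variable {P : Set A}

lemma HtpyCat.shift_eq_quotient_obj (X : HtpyCat A) (n : ℤ) :
    X⟦n⟧ = (HomotopyCategory.quotient A _).obj (X.as⟦n⟧) :=
  HomotopyCategory.shift_quotient_obj X.as n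

lemma mem_Kinfb_iff {K : CochainComplex A ℤ} :
    (HomotopyCategory.quotient A _).obj K ∈ Kinfb P ↔
      (∀ i, K.X i ∈ P) ∧ ∃ m n : ℤ, K.IsGE m ∧ K.IsLE n := by
  simp only [Kinfb, withComponentsIn, Set.mem_ofPred_eq, isGE_iff, isLE_iff, or_imp, forall_and]
  rfl

lemma mem_Kplusb_iff {K : CochainComplex A ℤ} :
    (HomotopyCategory.quotient A _).obj K ∈ Kplusb P ↔
      (HomotopyCategory.quotient A _).obj K ∈ Kinfb P ∧ ∃ n : ℤ, K.IsStrictlyGE n := by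
  simp only [Kplusb, Set.mem_ofPred_eq, isStrictlyGE_iff]
  rfl

lemma mem_Kminusb_iff {K : CochainComplex A ℤ} :
    (HomotopyCategory.quotient A _).obj K ∈ Kminusb P ↔
      (HomotopyCategory.quotient A _).obj K ∈ Kinfb P ∧ ∃ n : ℤ, K.IsStrictlyLE n := by
  simp only [Kminusb, Set.mem_ofPred_eq, isStrictlyLE_iff]
  rfl

lemma mem_Kb_iff {K : CochainComplex A ℤ} :
    (HomotopyCategory.quotient A _).obj K ∈ Kb P ↔
      (∀ i, K.X i ∈ P) ∧ ∃ m n : ℤ, K.IsStrictlyGE m ∧ K.IsStrictlyLE n := by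
  simp only [Kb, withComponentsIn, Set.mem_ofPred_eq, isStrictlyGE_iff, isStrictlyLE_iff, or_imp,
    forall_and]
  rfl

lemma Kb_subset_Kplusb : Kb P ⊆ Kplusb P := by
  intro X hX
  obtain ⟨hXP, m, n, hm, hn⟩ := mem_Kb_iff.1 hX
  exact mem_Kplusb_iff.2 ⟨mem_Kinfb_iff.2 ⟨hXP, m, n, inferInstance, inferInstance⟩, m, hm⟩

lemma Kb_subset_Kminusb : Kb P ⊆ Kminusb P := by
  intro X hX
  obtain ⟨hXP, m, n, hm, hn⟩ := mem_Kb_iff.1 hX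
  exact mem_Kminusb_iff.2 ⟨mem_Kinfb_iff.2 ⟨hXP, m, n, inferInstance, inferInstance⟩, n, hn⟩

lemma shift_mem_Kinfb {X : HtpyCat A} (hX : X ∈ Kinfb P) (n : ℤ) : X⟦n⟧ ∈ Kinfb P := by
  obtain ⟨hXP, a, b, ha, hb⟩ := mem_Kinfb_iff.1 hX
  rw [HtpyCat.shift_eq_quotient_obj]
  exact mem_Kinfb_iff.2 ⟨fun i => hXP (i + n), a - n, b - n,
    isGE_shift X.as a n (a - n) (by omega), isLE_shift X.as b n (b - n) (by omega)⟩

lemma shift_mem_Kplusb {X : HtpyCat A} (hX : X ∈ Kplusb P) (n : ℤ) : X⟦n⟧ ∈ Kplusb P := by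
  obtain ⟨hXinf, a, ha⟩ := mem_Kplusb_iff.1 hX
  have := shift_mem_Kinfb hXinf n
  rw [HtpyCat.shift_eq_quotient_obj] at this ⊢
  exact mem_Kplusb_iff.2 ⟨this, a - n, isStrictlyGE_shift X.as a n (a - n) (by omega)⟩

lemma shift_mem_Kminusb {X : HtpyCat A} (hX : X ∈ Kminusb P) (n : ℤ) : X⟦n⟧ ∈ Kminusb P := by
  obtain ⟨hXinf, b, hb⟩ := mem_Kminusb_iff.1 hX
  have := shift_mem_Kinfb hXinf n
  rw [HtpyCat.shift_eq_quotient_obj] at this ⊢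
  exact mem_Kminusb_iff.2 ⟨this, b - n, isStrictlyLE_shift X.as b n (b - n) (by omega)⟩

lemma exists_factorization_through_Kb (hP0 : ∀ X : A, IsZero X → X ∈ P) {X Y : HtpyCat A}
    (f : X ⟶ Y) (hX : X ∈ Kplusb P) (hY : Y ∈ Kminusb P) :
    ∃ (Z : HtpyCat A) (a : X ⟶ Z) (b : Z ⟶ Y), Z ∈ Kb P ∧ a ≫ b = f := by
  obtain ⟨hXinf, a, ha⟩ := mem_Kplusb_iff.1 hX
  obtain ⟨-, b, hb⟩ := mem_Kminusb_iff.1 hY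
  obtain ⟨φ, rfl⟩ := (HomotopyCategory.quotient A _).map_surjective f
  have hYb : ∀ i, ¬ ¬ b < i → IsZero (Y.as.X i) :=
    fun i hi => isZero_of_isStrictlyLE Y.as b i (not_not.1 hi)
  refine ⟨_, (HomotopyCategory.quotient A _).map
      (X.as.brutalTruncπ (¬ b < ·) fun i j (hij : i + 1 = j) hj => by omega),
    (HomotopyCategory.quotient A _).map (X.as.brutalTruncDesc _ φ hYb),
    mem_Kb_iff.2 ⟨X.as.brutalTrunc_X_mem _ hP0 (mem_Kinfb_iff.1 hXinf).1, a, b, inferInstance,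
      inferInstance⟩, ?_⟩
  exact (Functor.map_comp _ _ _).symm.trans (congrArg _ (X.as.brutalTruncπ_desc _ _ φ hYb))

lemma brutalTruncGT_mem_Kplusb (hP0 : ∀ X : A, IsZero X → X ∈ P) {X : HtpyCat A}
    (hX : X ∈ Kinfb P) (n : ℤ) :
    (HomotopyCategory.quotient A _).obj (brutalTruncGT X.as n) ∈ Kplusb P := by
  obtain ⟨hXP, _, b, -, hb⟩ := mem_Kinfb_iff.1 hX
  exact mem_Kplusb_iff.2 ⟨mem_Kinfb_iff.2 ⟨X.as.brutalTrunc_X_mem _ hP0 hXP, n + 1, max b (n + 1),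
    inferInstance, isLE_brutalTruncGT X.as n b⟩, n + 1, inferInstance⟩

lemma brutalTruncLE_mem_Kminusb (hP0 : ∀ X : A, IsZero X → X ∈ P) {X : HtpyCat A}
    (hX : X ∈ Kinfb P) (n : ℤ) :
    (HomotopyCategory.quotient A _).obj (brutalTruncLE X.as n) ∈ Kminusb P := by
  obtain ⟨hXP, a, _, ha, -⟩ := mem_Kinfb_iff.1 hX
  exact mem_Kminusb_iff.2 ⟨mem_Kinfb_iff.2 ⟨X.as.brutalTrunc_X_mem _ hP0 hXP, min a n, n,
    isGE_brutalTruncLE X.as a n, inferInstance⟩, n, inferInstance⟩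

end HomotopyCategory

theorem stableTStructure_Kplusb_Kminusb_mod_Kb_general
    (P : Set A)
    (hP0 : ∀ X : A, IsZero X → X ∈ P) :
    IsStableTStructureModOn (Kinfb P) (Kb P) (Kplusb P) (Kminusb P) :=
  ⟨Kb_subset_Kplusb, Kb_subset_Kminusb, fun _ hX => hX.1, fun _ hX => hX.1,
    fun n _ hX => shift_mem_Kplusb hX n, fun n _ hX => shift_mem_Kminusb hX n,
    fun _ _ f hX hY => exists_factorization_through_Kb hP0 f hX hY,
    fun X hX => ⟨_, _, _, _, _, brutalTruncGT_mem_Kplusb hP0 hX 0,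
      brutalTruncLE_mem_Kminusb hP0 hX 0,
      CochainComplex.brutalTruncTriangle_distinguished X.as 0⟩⟩

/-- For any additive full subcategory `P` of an abelian category `A`, the pair
`(K^{+,b}(P)/K^b(P), K^{-,b}(P)/K^b(P))` is a stable t-structure in
`K^{∞,b}(P)/K^b(P)`; in particular every complex `X` with bounded homology sits in a
distinguished triangle whose outer vertices are a bounded below and a bounded above
complex (given by the brutal truncations `τ_{≥1} X` and `τ_{≤0} X`). -/
theorem stableTStructure_Kplusb_Kminusb_mod_Kb
    (P : Set A)
    (hP0 : ∀ X : A, IsZero X → X ∈ P)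
    (hPsum : ∀ X Y : A, X ∈ P → Y ∈ P → (X ⊞ Y) ∈ P) :
    IsStableTStructureModOn (Kinfb P) (Kb P) (Kplusb P) (Kminusb P) :=
  stableTStructure_Kplusb_Kminusb_mod_Kb_general P hP0
end
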